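/- arXiv:math/0602030 — 3 statements merged into one kernel-verified Lean document; each statement's English description precedes it below -/
import Mathlib

section
/- Let 𝔩 be a finite-dimensional Lie algebra of holomorphic vector fields on a neighborhood of a ∈ E (E a finite-dimensional complex vector space) containing the field η = (z − a)·d/dz. Then every element of 𝔩 is a polynomial vector field. More precisely: if ξ = Σ_{k≥0} ξ_k is the homogeneous expansion of ξ ∈ 𝔩 around a (ξ_k = p_k(z−a)·d/dz with p_k k-homogeneous), then ad(η)ξ = Σ_k (k−1)ξ_k, and if dim 𝔩 = d then ξ_k = 0 for all but at most d values of k. -/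
/-!
Along the complex line `t ↦ a + t v` the expansion of a field becomes the power series
`∑ tᵏ ξₖ(v)`, and the Euler field `η` acts as `t d/dt - 1`, so `ad η` multiplies `ξₖ` by `k - 1`.
On the finite-dimensional space `𝔩`, `ad η` is annihilated by its characteristic polynomial `χ`
(Cayley–Hamilton), hence `0 = χ(ad η) ξ = ∑ χ(k - 1) ξₖ`. By uniqueness of power series
coefficients `ξₖ = 0` unless `k - 1` is one of the at most `dim 𝔩` roots of `χ`. The resulting
polynomial identity near `a` propagates to all of `E` by the identity theorem on each line.
-/

open Filter Polynomial
open scoped Topology ENNReal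

namespace FormalMultilinearSeries

variable {𝕜 E : Type*} [NontriviallyNormedField 𝕜] [NormedAddCommGroup E] [NormedSpace 𝕜 E]

variable (𝕜) in
noncomputable def ofCoeffs (b : ℕ → E) : FormalMultilinearSeries 𝕜 𝕜 E :=
  fun k => ContinuousMultilinearMap.mkPiRing 𝕜 (Fin k) (b k)

@[simp] lemma ofCoeffs_apply_diag (b : ℕ → E) (k : ℕ) (t : 𝕜) :
    ofCoeffs 𝕜 b k (fun _ => t) = t ^ k • b k := by
  simp [ofCoeffs]

@[simp] lemma ofCoeffs_coeff (b : ℕ → E) (k : ℕ) : (ofCoeffs 𝕜 b).coeff k = b k := by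
  simp [coeff, ofCoeffs]

lemma hasFPowerSeriesAt_ofCoeffs {g : 𝕜 → E} {b : ℕ → E}
    (h : ∀ᶠ t in 𝓝 0, HasSum (fun k => t ^ k • b k) (g t)) :
    HasFPowerSeriesAt g (ofCoeffs 𝕜 b) 0 := by
  obtain ⟨ε, hε, hball⟩ := Metric.eventually_nhds_iff.1 h
  obtain ⟨t₀, ht₀, ht₀ε⟩ := NormedField.exists_norm_lt 𝕜 hε
  have hρ : (‖t₀‖₊ : ℝ≥0∞) ≤ (ofCoeffs 𝕜 b).radius := by
    refine (ofCoeffs 𝕜 b).le_radius_of_tendsto (l := 0) ?_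
    have := (hball (by simpa using ht₀ε)).summable.tendsto_atTop_zero.norm
    simpa [ofCoeffs, norm_smul, mul_comm] using this
  refine ⟨‖t₀‖₊, hρ, by simpa using ht₀, fun {t} ht => ?_⟩
  have ht' : ‖t‖ < ‖t₀‖ := by simpa [enorm_eq_nnnorm, ← NNReal.coe_lt_coe] using ht
  simpa using hball (by simpa using ht'.trans ht₀ε)

end FormalMultilinearSeries

open FormalMultilinearSeries

section OneVariable

variable {𝕜 E : Type*} [NontriviallyNormedField 𝕜] [NormedAddCommGroup E] [NormedSpace 𝕜 E]

lemma eventually_hasSum_smul_deriv_sub [CompleteSpace E] {g : 𝕜 → E} {b : ℕ → E}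
    (h : ∀ᶠ t in 𝓝 0, HasSum (fun k => t ^ k • b k) (g t)) :
    ∀ᶠ t in 𝓝 0, HasSum (fun k : ℕ => t ^ k • (((k : 𝕜) - 1) • b k)) (t • deriv g t - g t) := by
  obtain ⟨ρ, hρ⟩ := hasFPowerSeriesAt_ofCoeffs h
  filter_upwards [Metric.eball_mem_nhds (0 : 𝕜) hρ.r_pos, h] with t ht hgt
  have hderiv : HasSum (fun k => (k + 1) • (t ^ (k + 1) • b (k + 1))) (t • deriv g t) := by
    have := (hρ.fderiv.hasSum ht).mapL (ContinuousLinearMap.apply 𝕜 E t)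
    simp only [ContinuousLinearMap.apply_apply, derivSeries_apply_diag, ofCoeffs_apply_diag,
      zero_add] at this
    rwa [fderiv_eq_smul_deriv] at this
  have hderiv' : HasSum (fun k => k • (t ^ k • b k)) (t • deriv g t) :=
    (hasSum_nat_add_iff' 1).1 (by simpa using hderiv)
  convert hderiv'.sub hgt using 1
  funext k
  rw [smul_comm, sub_smul, one_smul, Nat.cast_smul_eq_nsmul]

lemma eq_zero_of_eventually_hasSum_zero {b : ℕ → E}
    (h : ∀ᶠ t in 𝓝 (0 : 𝕜), HasSum (fun k => t ^ k • b k) 0) : b = 0 := by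
  funext k
  have := congr_arg (fun q => q fun _ => (1 : 𝕜))
    (congr_fun (hasFPowerSeriesAt_ofCoeffs (g := 0) h).eq_zero k)
  simpa using this

lemma Differentiable.hasSum_of_eventually_hasSum {E : Type*} [NormedAddCommGroup E]
    [NormedSpace ℂ E] [CompleteSpace E] {g : ℂ → E} {b : ℕ → E} {s : Finset ℕ}
    (hg : Differentiable ℂ g) (hb : ∀ k ∉ s, b k = 0)
    (h : ∀ᶠ t in 𝓝 0, HasSum (fun k => t ^ k • b k) (g t)) (t : ℂ) :
    HasSum (fun k => t ^ k • b k) (g t) := by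
  have hsum (t : ℂ) : HasSum (fun k => t ^ k • b k) (∑ k ∈ s, t ^ k • b k) :=
    hasSum_sum_of_ne_finset_zero fun k hk => by simp [hb k hk]
  have hpoly : Differentiable ℂ fun t : ℂ => ∑ k ∈ s, t ^ k • b k := by fun_prop
  have heq : g = fun t => ∑ k ∈ s, t ^ k • b k :=
    AnalyticOnNhd.eq_of_eventuallyEq (fun t _ => hg.analyticAt t) (fun t _ => hpoly.analyticAt t)
      (h.mono fun t ht => ht.unique (hsum t))
  rw [heq]
  exact hsum t

end OneVariable

lemma Polynomial.ncard_le_natDegree_of_isRoot {R α : Type*} [CommRing R] [IsDomain R]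
    {p : R[X]} (hp : p ≠ 0) {φ : α → R} (hφ : Function.Injective φ) {S : Set α}
    (hS : ∀ x ∈ S, p.IsRoot (φ x)) : S.ncard ≤ p.natDegree := by
  classical
  have hroots : {x | p.IsRoot x} = ↑p.roots.toFinset := by ext; simp [mem_roots hp]
  calc S.ncard ≤ {x | p.IsRoot x}.ncard :=
        Set.ncard_le_ncard_of_injOn φ hS hφ.injOn (finite_setOfPred_isRoot hp)
    _ ≤ p.natDegree := by
        rw [hroots, Set.ncard_coe_finset]
        exact (Multiset.toFinset_card_le _).trans (card_roots' p)

section VectorFields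

variable {E : Type*} [NormedAddCommGroup E] [NormedSpace ℂ E] {a : E}

/-- `ad η` for the Euler field `η = (z - a) ∂/∂z`. -/
noncomputable def adEuler (a : E) (f : E → E) : E → E :=
  fun z => fderiv ℂ f z (z - a) - f z

/-- For the homogeneous expansion `f z = ∑ Pₖ (z - a, …, z - a)`, `bₖ = Pₖ (v, …, v)`. -/
def HasLineExpansion (f : E → E) (a v : E) (b : ℕ → E) : Prop :=
  ∀ᶠ t in 𝓝 (0 : ℂ), HasSum (fun k => t ^ k • b k) (f (a + t • v))

noncomputable def adEulerEnd {𝔩 : Submodule ℂ (E → E)} (hdiff : ∀ f ∈ 𝔩, Differentiable ℂ f)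
    (hmem : ∀ f ∈ 𝔩, adEuler a f ∈ 𝔩) : Module.End ℂ 𝔩 where
  toFun f := ⟨adEuler a f, hmem f f.2⟩
  map_add' f g := by
    ext z
    simp [adEuler, fderiv_add (hdiff f f.2 z) (hdiff g g.2 z), add_sub_add_comm]
  map_smul' c f := by
    ext z
    simp [adEuler, fderiv_const_smul (hdiff f f.2 z), smul_sub]

lemma adEuler_mem {𝔩 : Submodule ℂ (E → E)} (hη : (fun z => z - a) ∈ 𝔩)
    (hbracket : ∀ f ∈ 𝔩, ∀ g ∈ 𝔩, (fun z => fderiv ℂ g z (f z) - fderiv ℂ f z (g z)) ∈ 𝔩)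
    {f : E → E} (hf : f ∈ 𝔩) : adEuler a f ∈ 𝔩 := by
  unfold adEuler
  simpa only [fderiv_sub_const, fderiv_fun_id, ContinuousLinearMap.id_apply]
    using hbracket _ hη f hf

lemma hasLineExpansion_of_hasSum {f : E → E} {U : Set E} (hU : U ∈ 𝓝 a)
    {P : (k : ℕ) → ContinuousMultilinearMap ℂ (fun _ : Fin k => E) E}
    (hexp : ∀ z ∈ U, HasSum (fun k => P k fun _ => z - a) (f z)) (v : E) :
    HasLineExpansion f a v (fun k => P k fun _ => v) := by
  have hU_line : ∀ᶠ t in 𝓝 (0 : ℂ), a + t • v ∈ U :=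
    (by fun_prop : Continuous fun t : ℂ => a + t • v).tendsto' 0 a (by simp) hU
  filter_upwards [hU_line] with t ht
  simpa [ContinuousMultilinearMap.map_smul_univ] using hexp _ ht

variable [CompleteSpace E] {f : E → E} {v : E} {b : ℕ → E}

lemma HasLineExpansion.adEuler (hf : Differentiable ℂ f) (h : HasLineExpansion f a v b) :
    HasLineExpansion (adEuler a f) a v (fun k => ((k : ℂ) - 1) • b k) := by
  filter_upwards [eventually_hasSum_smul_deriv_sub (g := fun t => f (a + t • v)) h] with t ht
  have hline : HasDerivAt (fun s : ℂ => f (a + s • v)) (fderiv ℂ f (a + t • v) v) t :=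
    (hf _).hasFDerivAt.comp_hasDerivAt t
      (by simpa using ((hasDerivAt_id t).smul_const v).const_add a)
  simpa [_root_.adEuler, hline.deriv] using ht

lemma HasLineExpansion.hasSum {s : Finset ℕ} (hf : Differentiable ℂ f) (hb : ∀ k ∉ s, b k = 0)
    (h : HasLineExpansion f a v b) : HasSum b (f (a + v)) := by
  simpa using (hf.comp (by fun_prop)).hasSum_of_eventually_hasSum hb h 1

lemma HasLineExpansion.aeval_adEulerEnd {𝔩 : Submodule ℂ (E → E)}
    (hdiff : ∀ f ∈ 𝔩, Differentiable ℂ f) (hmem : ∀ f ∈ 𝔩, _root_.adEuler a f ∈ 𝔩) {f : 𝔩}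
    (h : HasLineExpansion f a v b) (q : ℂ[X]) :
    HasLineExpansion (aeval (adEulerEnd hdiff hmem) q f) a v
      (fun k => q.eval ((k : ℂ) - 1) • b k) := by
  induction q using Polynomial.induction_on generalizing f b with
  | C c =>
    filter_upwards [h] with t ht
    simpa [smul_comm _ c] using ht.const_smul c
  | add p q hp hq =>
    filter_upwards [hp h, hq h] with t htp htq
    simpa [add_smul] using htp.add htq
  | monomial n c ih =>
    have := ih (f := adEulerEnd hdiff hmem f) (h.adEuler (hdiff f f.2))
    rw [pow_succ, ← mul_assoc, aeval_mul, aeval_X, Module.End.mul_apply]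
    simpa [mul_smul] using this

lemma HasLineExpansion.isRoot_charpoly {𝔩 : Submodule ℂ (E → E)} [FiniteDimensional ℂ 𝔩]
    (hdiff : ∀ f ∈ 𝔩, Differentiable ℂ f) (hmem : ∀ f ∈ 𝔩, _root_.adEuler a f ∈ 𝔩) {f : 𝔩}
    (h : HasLineExpansion f a v b) {k : ℕ} (hk : b k ≠ 0) :
    (adEulerEnd hdiff hmem).charpoly.IsRoot ((k : ℂ) - 1) := by
  have hzero := h.aeval_adEulerEnd hdiff hmem (adEulerEnd hdiff hmem).charpoly
  rw [LinearMap.aeval_self_charpoly] at hzero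
  have := congr_fun (eq_zero_of_eventually_hasSum_zero hzero) k
  exact (smul_eq_zero.1 this).resolve_right hk

end VectorFields

/-- Let `𝔩` be a finite-dimensional complex Lie algebra of holomorphic vector
fields near `a ∈ E` (closed under the bracket `[f,g] = g'·f − f'·g`), containing
`η = (z − a)∂/∂z`. If `ξ ∈ 𝔩` has the homogeneous expansion `ξ(z) = Σ_k P_k(z−a,…,z−a)`
near `a`, then `ad(η)ξ = [η,ξ] = ξ'(z)(z−a) − ξ(z)` has the expansion
`Σ_k (k−1)·P_k(z−a,…,z−a)`, at most `d = dim 𝔩` of the homogeneous components are nonzero,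
and `ξ` is a polynomial vector field near `a`. -/
theorem stmt_2 {E : Type*} [NormedAddCommGroup E] [NormedSpace ℂ E] [FiniteDimensional ℂ E]
    (a : E) (𝔩 : Submodule ℂ (E → E)) [FiniteDimensional ℂ ↥𝔩] (d : ℕ)
    (hd : Module.finrank ℂ ↥𝔩 = d)
    (hη : (fun z => z - a) ∈ 𝔩)
    (hdiff : ∀ f ∈ 𝔩, ∀ z : E, DifferentiableAt ℂ f z)
    (hbracket : ∀ f ∈ 𝔩, ∀ g ∈ 𝔩,
      (fun z => fderiv ℂ g z (f z) - fderiv ℂ f z (g z)) ∈ 𝔩)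
    (ξ : E → E) (hξ : ξ ∈ 𝔩)
    (P : (k : ℕ) → ContinuousMultilinearMap ℂ (fun _ : Fin k => E) E)
    (U : Set E) (hU : U ∈ nhds a)
    (hexp : ∀ z ∈ U, HasSum (fun k : ℕ => P k (fun _ => z - a)) (ξ z)) :
    (∀ z ∈ U, HasSum (fun k : ℕ => ((k : ℂ) - 1) • P k (fun _ => z - a))
        (fderiv ℂ ξ z (z - a) - ξ z))
      ∧ {k : ℕ | (fun z : E => P k (fun _ => z - a)) ≠ 0}.Finite
      ∧ Set.ncard {k : ℕ | (fun z : E => P k (fun _ => z - a)) ≠ 0} ≤ d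
      ∧ ∃ N : ℕ, ∀ z ∈ U, ξ z = ∑ k ∈ Finset.range N, P k (fun _ => z - a) := by
  have := FiniteDimensional.complete ℂ E
  have hmem : ∀ f ∈ 𝔩, adEuler a f ∈ 𝔩 := fun f => adEuler_mem hη hbracket
  set χ := (adEulerEnd hdiff hmem).charpoly
  set S := {k : ℕ | (fun z : E => P k (fun _ => z - a)) ≠ 0}
  have hξ_line := hasLineExpansion_of_hasSum hU hexp
  have hroots : ∀ k ∈ S, χ.IsRoot ((k : ℂ) - 1) := fun k hk => by
    obtain ⟨z, hz⟩ := Function.ne_iff.1 hk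
    exact (hξ_line (z - a)).isRoot_charpoly hdiff hmem (f := ⟨ξ, hξ⟩) hz
  have hinj : Function.Injective fun k : ℕ => (k : ℂ) - 1 := fun k l hkl => by simpa using hkl
  have hχ : χ ≠ 0 := (adEulerEnd hdiff hmem).charpoly_monic.ne_zero
  have hS : S.Finite := ((finite_setOfPred_isRoot hχ).preimage hinj.injOn).subset hroots
  have hcard : S.ncard ≤ d := by
    simpa [χ, LinearMap.charpoly_natDegree, hd] using ncard_le_natDegree_of_isRoot hχ hinj hroots
  obtain ⟨N, hN⟩ := Finset.exists_nat_subset_range hS.toFinset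
  have hvanish : ∀ k ∉ Finset.range N, ∀ z, P k (fun _ => z - a) = 0 := fun k hk z => by
    by_contra h
    exact hk (hN (hS.mem_toFinset.2 (Function.ne_iff.2 ⟨z, h⟩)))
  refine ⟨fun z _ => ?_, hS, hcard, N, fun z hz =>
    (hexp z hz).unique (hasSum_sum_of_ne_finset_zero fun k hk => hvanish k hk z)⟩
  simpa [adEuler] using ((hξ_line (z - a)).adEuler (hdiff ξ hξ)).hasSum (hdiff _ (hmem ξ hξ))
    (s := Finset.range N) fun k hk => by simp [hvanish k hk z]
end

section
/- Let φ ∈ End(V) for V finite-dimensional over a field, and let a, b ∈ V both be cyclic vectors of φ. Then there exists an invertible g ∈ GL(V) that is a polynomial in φ (i.e. g ∈ k[φ]) with g(a) = b. -/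
theorem aux_cyclic_reach {K V : Type*} [Field K] [AddCommGroup V] [Module K V]
    (φ : V →ₗ[K] V) (v : V)
    (hv : Submodule.span K (Set.range fun k : ℕ => (φ ^ k) v) = ⊤) (w : V) :
    ∃ p : Polynomial K, (Polynomial.aeval φ p) v = w := by
  have hw : w ∈ Submodule.span K (Set.range fun k : ℕ => (φ ^ k) v) :=
    hv ▸ Submodule.mem_top
  induction hw using Submodule.span_induction with
  | mem x hx =>
      obtain ⟨k, rfl⟩ := hx
      exact ⟨Polynomial.X ^ k, by simp⟩
  | zero => exact ⟨0, by simp⟩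
  | add x y _ _ hx hy =>
      obtain ⟨p, hp⟩ := hx
      obtain ⟨q, hq⟩ := hy
      exact ⟨p + q, by simp [hp, hq]⟩
  | smul c x _ hx =>
      obtain ⟨p, hp⟩ := hx
      exact ⟨c • p, by simp [hp]⟩

/-- If `a` and `b` are both cyclic vectors of `φ ∈ End(V)`, `V` a
finite-dimensional vector space over a field `K`, then there is an invertible `g ∈ GL(V)`
which is a polynomial in `φ` with `g a = b`. -/
theorem stmt_10 {K V : Type*} [Field K] [AddCommGroup V] [Module K V] [FiniteDimensional K V]
    (φ : V →ₗ[K] V) (a b : V)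
    (ha : Submodule.span K (Set.range fun k : ℕ => (φ ^ k) a) = ⊤)
    (hb : Submodule.span K (Set.range fun k : ℕ => (φ ^ k) b) = ⊤) :
    ∃ P : Polynomial K, IsUnit (Polynomial.aeval φ P) ∧ (Polynomial.aeval φ P) a = b := by
  obtain ⟨p, hp⟩ := aux_cyclic_reach φ a ha b
  obtain ⟨q, hq⟩ := aux_cyclic_reach φ b hb a
  have hqp : Polynomial.aeval φ (q * p) = 1 := by
    apply LinearMap.ext
    intro x
    have hx : x ∈ Submodule.span K (Set.range fun k : ℕ => (φ ^ k) a) :=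
      ha ▸ Submodule.mem_top
    have hmem : x ∈ LinearMap.ker (Polynomial.aeval φ (q * p) - 1) := by
      refine Submodule.span_le.mpr ?_ hx
      rintro y ⟨k, rfl⟩
      simp only [SetLike.mem_coe, LinearMap.mem_ker, LinearMap.sub_apply, Module.End.one_apply,
        sub_eq_zero]
      have comm : Polynomial.aeval φ (q * p) * φ ^ k = φ ^ k * Polynomial.aeval φ (q * p) := by
        have h1 : Polynomial.aeval φ (q * p * Polynomial.X ^ k)
            = Polynomial.aeval φ (Polynomial.X ^ k * (q * p)) := by ring_nf
        simpa [map_mul] using h1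
      calc (Polynomial.aeval φ (q * p)) ((φ ^ k) a)
          = (Polynomial.aeval φ (q * p) * φ ^ k) a := rfl
        _ = (φ ^ k * Polynomial.aeval φ (q * p)) a := by rw [comm]
        _ = (φ ^ k) ((Polynomial.aeval φ (q * p)) a) := rfl
        _ = (φ ^ k) a := by simp [map_mul, hp, hq]
    simpa [sub_eq_zero] using (LinearMap.mem_ker.mp hmem)
  refine ⟨p, ?_, hp⟩
  have hpq : Polynomial.aeval φ p * Polynomial.aeval φ q = 1 := by
    rw [← map_mul, mul_comm p q, hqp]
  have hqp' : Polynomial.aeval φ q * Polynomial.aeval φ p = 1 := by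
    rw [← map_mul, hqp]
  exact ⟨⟨Polynomial.aeval φ p, Polynomial.aeval φ q, hpq, hqp'⟩, rfl⟩
end

section
/- Let 𝔥 ⊆ End(ℂⁿ) be a complex linear subspace of diagonal matrices of dimension d+1 ≤ n−1 such that every nonzero λ ∈ 𝔥 has rank ≥ 2. Suppose ξ = Σ_{j,k,p} c_p^{jk} z_j z_k ∂/∂z_p (with c_p^{jk} = c_p^{kj}) is a quadratic vector field such that for every r, the bracket [∂/∂z_r, ξ] = 2 Σ_{k,p} c_p^{kr} z_k ∂/∂z_p lies in {λz ∂/∂z : λ ∈ 𝔥}. Then ξ = 0. -/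
/-! Diagonality of the `r`-th bracket kills `c_p^{kr}` for `p ≠ k`, and then symmetry kills
`c_p^{pr} = c_p^{rp}` for `p ≠ r`. So the `r`-th bracket is supported on the single entry
`(r, r)`, has rank at most one, and therefore vanishes. -/

theorem Matrix.rank_le_one_of_row_eq_zero {m n R : Type*} [Fintype n] [CommSemiring R]
    [StrongRankCondition R] (A : Matrix m n R) (r : m) (h : ∀ p, p ≠ r → A p = 0) :
    A.rank ≤ 1 := by
  classical
  exact A.rank_le_card_of_support_subset {r} fun p hp =>
    Finset.mem_singleton.mpr (not_not.mp fun hpr => hp (h p hpr))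

theorem eq_zero_of_symm_of_slices_diagonal {ι R : Type*} [Zero R] (c : ι → ι → ι → R)
    (hsymm : ∀ p j k, c p j k = c p k j) (hdiag : ∀ p k r, p ≠ k → c p k r = 0)
    {p r : ι} (hpr : p ≠ r) (k : ι) : c p k r = 0 := by
  obtain rfl | hpk := eq_or_ne p k
  · rw [hsymm]
    exact hdiag p r p hpr
  · exact hdiag p k r hpk

theorem stmt_14_general (n : ℕ)
    (𝔥 : Submodule ℂ (Matrix (Fin n) (Fin n) ℂ))
    (hdiag : ∀ A ∈ 𝔥, ∀ j k, j ≠ k → A j k = 0)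
    (hrank : ∀ A ∈ 𝔥, A ≠ 0 → 2 ≤ A.rank)
    (c : Fin n → Fin n → Fin n → ℂ)
    (hsymm : ∀ p j k, c p j k = c p k j)
    (hbr : ∀ r : Fin n, (Matrix.of fun p k : Fin n => 2 * c p k r) ∈ 𝔥) :
    c = 0 := by
  have hoff : ∀ p k r, p ≠ k → c p k r = 0 := fun p k r hpk =>
    (mul_eq_zero.mp (hdiag _ (hbr r) p k hpk)).resolve_left two_ne_zero
  have hbracket : ∀ r, (Matrix.of fun p k : Fin n => 2 * c p k r) = 0 := by
    intro r
    by_contra hne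
    have hle : (Matrix.of fun p k : Fin n => 2 * c p k r).rank ≤ 1 :=
      Matrix.rank_le_one_of_row_eq_zero _ r fun p hpr => by
        ext k
        simp [eq_zero_of_symm_of_slices_diagonal c hsymm hoff hpr k]
    have hge := hrank _ (hbr r) hne
    omega
  funext p k r
  simpa using congrFun₂ (hbracket r) p k

/-- Let `𝔥 ⊆ End(ℂⁿ)` be a complex subspace of diagonal matrices of dimension
`d+1 ≤ n−1` such that every nonzero `λ ∈ 𝔥` has rank `≥ 2`. If the quadratic vector field
`ξ = Σ c_p^{jk} z_j z_k ∂/∂z_p` (`c_p^{jk} = c_p^{kj}`) is such that for every `r` the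
bracket `[∂/∂z_r, ξ] = 2 Σ c_p^{kr} z_k ∂/∂z_p` (a linear field with matrix
`(2 c_p^{kr})_{p,k}`) lies in `{λz ∂/∂z : λ ∈ 𝔥}`, then `ξ = 0`. -/
theorem stmt_14 (n d : ℕ) (hd : d + 2 ≤ n)
    (𝔥 : Submodule ℂ (Matrix (Fin n) (Fin n) ℂ))
    (hdim : Module.finrank ℂ ↥𝔥 = d + 1)
    (hdiag : ∀ A ∈ 𝔥, ∀ j k, j ≠ k → A j k = 0)
    (hrank : ∀ A ∈ 𝔥, A ≠ 0 → 2 ≤ A.rank)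
    (c : Fin n → Fin n → Fin n → ℂ)
    (hsymm : ∀ p j k, c p j k = c p k j)
    (hbr : ∀ r : Fin n, (Matrix.of fun p k : Fin n => 2 * c p k r) ∈ 𝔥) :
    c = 0 :=
  stmt_14_general n 𝔥 hdiag hrank c hsymm hbr
end
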